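/- arXiv:2401.02155 — 6 statements merged into one kernel-verified Lean document; each statement's English description precedes it below -/
import Mathlib

section
/- Let Δ be a positive integer and let G be a graph with maximum degree at most Δ. Let L = {v ∈ V(G) : deg_G(v) ≤ Δ^{1/3}}. Then there is a proper colouring f of the induced subgraph G[L] using at most 2·Δ^{1/3} + 1 colours such that for every vertex v of G with N(v) ∩ L ≠ ∅ there exists w ∈ N(v) ∩ L whose colour f(w) is different from the colour of every other vertex of N(v) ∩ L. -/
/-!
Colour the low-degree vertices greedily, one at a time. A new vertex `a` of degree at most `t`
must avoid the colours of its already coloured neighbours (keeping the colouring proper) and, for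
each neighbour `v` of `a`, the colour of the current uniquely coloured vertex of `N(v)`
(so that this vertex stays uniquely coloured). That forbids at most `2t` colours, so `2t + 1`
colours suffice.
-/

open Finset

namespace SimpleGraph

variable {V α : Type*} (G : SimpleGraph V)

def IsProperOn (S : Finset V) (f : V → α) : Prop :=
  ∀ u ∈ S, ∀ v ∈ S, G.Adj u v → f u ≠ f v

variable [Fintype V] [DecidableEq V] [DecidableRel G.Adj]

def IsConflictFreeOn (S : Finset V) (f : V → α) : Prop :=
  ∀ v, (G.neighborFinset v ∩ S).Nonempty →
    ∃ w ∈ G.neighborFinset v ∩ S, ∀ u ∈ G.neighborFinset v ∩ S, u ≠ w → f u ≠ f w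

variable {G}

lemma IsProperOn.insert {S : Finset V} {a : V} {f g : V → α} (hf : G.IsProperOn S f)
    (hgf : ∀ x ∈ S, g x = f x) (hga : ∀ u ∈ G.neighborFinset a ∩ S, f u ≠ g a) :
    G.IsProperOn (insert a S) g := by
  have hnew : ∀ u ∈ S, G.Adj a u → g a ≠ g u := fun u hu hau =>
    hgf u hu ▸ (hga u (mem_inter.2 ⟨(G.mem_neighborFinset _ _).2 hau, hu⟩)).symm
  intro u hu v hv huv
  rcases mem_insert.1 hu with rfl | huS <;> rcases mem_insert.1 hv with rfl | hvS
  · exact absurd huv (G.irrefl)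
  · exact hnew v hvS huv
  · exact (hnew u huS huv.symm).symm
  · rw [hgf u huS, hgf v hvS]
    exact hf u huS v hvS huv

lemma IsConflictFreeOn.insert {S : Finset V} {a : V} (ha : a ∉ S) {f g : V → α} {w : V → V}
    (hw : ∀ v, (G.neighborFinset v ∩ S).Nonempty →
      w v ∈ G.neighborFinset v ∩ S ∧ ∀ u ∈ G.neighborFinset v ∩ S, u ≠ w v → f u ≠ f (w v))
    (hgf : ∀ x ∈ S, g x = f x) (hga : ∀ v ∈ G.neighborFinset a, f (w v) ≠ g a) :
    G.IsConflictFreeOn (insert a S) g := by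
  intro v hv
  by_cases hav : a ∈ G.neighborFinset v
  · rw [inter_insert_of_mem hav] at hv ⊢
    by_cases hS : (G.neighborFinset v ∩ S).Nonempty
    · obtain ⟨hwv, hwu⟩ := hw v hS
      have hva : v ∈ G.neighborFinset a := by
        rw [mem_neighborFinset] at hav ⊢
        exact hav.symm
      refine ⟨w v, mem_insert_of_mem hwv, fun u hu hne => ?_⟩
      rw [hgf _ (mem_inter.1 hwv).2]
      rcases mem_insert.1 hu with rfl | hu
      · exact (hga v hva).symm
      · rw [hgf u (mem_inter.1 hu).2]
        exact hwu u hu hne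
    · rw [not_nonempty_iff_eq_empty.1 hS]
      exact ⟨a, mem_singleton_self a, fun u hu hne => absurd (mem_singleton.1 hu) hne⟩
  · rw [inter_insert_of_notMem hav] at hv ⊢
    obtain ⟨hwv, hwu⟩ := hw v hv
    refine ⟨w v, hwv, fun u hu hne => ?_⟩
    rw [hgf u (mem_inter.1 hu).2, hgf _ (mem_inter.1 hwv).2]
    exact hwu u hu hne

lemma exists_colour_lt_of_degree_le {t : ℕ} {a : V} (hat : G.degree a ≤ t) (S : Finset V)
    (f : V → ℕ) (w : V → V) :
    ∃ c < 2 * t + 1, (∀ u ∈ G.neighborFinset a ∩ S, f u ≠ c) ∧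
      ∀ v ∈ G.neighborFinset a, f (w v) ≠ c := by
  have hcard : #((G.neighborFinset a ∩ S).image f ∪ (G.neighborFinset a).image (f ∘ w)) <
      #(range (2 * t + 1)) := by
    rw [card_range]
    calc _ ≤ #((G.neighborFinset a ∩ S).image f) + #((G.neighborFinset a).image (f ∘ w)) :=
          card_union_le _ _
      _ ≤ #(G.neighborFinset a) + #(G.neighborFinset a) :=
          add_le_add (card_image_le.trans (card_le_card inter_subset_left)) card_image_le
      _ < 2 * t + 1 := by rw [card_neighborFinset_eq_degree]; omega
  obtain ⟨c, hc, hcf⟩ := exists_mem_notMem_of_card_lt_card hcard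
  refine ⟨c, mem_range.1 hc, fun u hu hfu => hcf ?_, fun v hv hfv => hcf ?_⟩
  · exact mem_union_left _ (mem_image.2 ⟨u, hu, hfu⟩)
  · exact mem_union_right _ (mem_image.2 ⟨v, hv, hfv⟩)

theorem exists_isProperOn_isConflictFreeOn {t : ℕ} (S : Finset V)
    (hS : ∀ v ∈ S, G.degree v ≤ t) :
    ∃ f : V → ℕ, (∀ v ∈ S, f v < 2 * t + 1) ∧ G.IsProperOn S f ∧ G.IsConflictFreeOn S f := by
  induction S using Finset.induction_on with
  | empty => exact ⟨fun _ => 0, by simp, by simp [IsProperOn], by simp [IsConflictFreeOn]⟩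
  | @insert a S ha ih =>
    obtain ⟨f, hft, hfp, hfc⟩ := ih fun v hv => hS v (mem_insert_of_mem hv)
    choose! w hw using hfc
    obtain ⟨c, hct, hcN, hcW⟩ :=
      exists_colour_lt_of_degree_le (hS a (mem_insert_self a S)) S f w
    have hgf : ∀ x ∈ S, Function.update f a c x = f x := fun x hx =>
      Function.update_of_ne (ne_of_mem_of_not_mem hx ha) _ _
    refine ⟨Function.update f a c, ?_, ?_, ?_⟩
    · intro v hv
      rcases mem_insert.1 hv with rfl | hv
      · rwa [Function.update_self]
      · rw [hgf v hv]
        exact hft v hv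
    · exact hfp.insert hgf (by rwa [Function.update_self])
    · exact IsConflictFreeOn.insert ha hw hgf (by rwa [Function.update_self])

end SimpleGraph

theorem statement2_general (Δ : ℕ)
    (V : Type) [Fintype V] [DecidableEq V] (G : SimpleGraph V) [DecidableRel G.Adj]
    (L : Finset V) (hL : ∀ v : V, v ∈ L ↔ (G.degree v : ℝ) ≤ (Δ : ℝ) ^ ((1 : ℝ) / 3)) :
    ∃ f : V → ℕ,
      ((L.image f).card : ℝ) ≤ 2 * (Δ : ℝ) ^ ((1 : ℝ) / 3) + 1 ∧
      (∀ u ∈ L, ∀ v ∈ L, G.Adj u v → f u ≠ f v) ∧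
      (∀ v : V, (G.neighborFinset v ∩ L).Nonempty →
        ∃ w ∈ G.neighborFinset v ∩ L,
          ∀ u ∈ G.neighborFinset v ∩ L, u ≠ w → f u ≠ f w) := by
  set t := ⌊(Δ : ℝ) ^ ((1 : ℝ) / 3)⌋₊
  obtain ⟨f, hft, hproper, hconflict⟩ :=
    G.exists_isProperOn_isConflictFreeOn (t := t) L fun v hv => Nat.le_floor ((hL v).1 hv)
  refine ⟨f, ?_, hproper, hconflict⟩
  have hcard : #(L.image f) ≤ 2 * t + 1 :=
    (card_le_card (image_subset_iff.2 fun v hv => mem_range.2 (hft v hv))).trans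
      (card_range _).le
  have ht : (t : ℝ) ≤ (Δ : ℝ) ^ ((1 : ℝ) / 3) := Nat.floor_le (by positivity)
  calc (#(L.image f) : ℝ) ≤ 2 * t + 1 := by exact_mod_cast hcard
    _ ≤ 2 * (Δ : ℝ) ^ ((1 : ℝ) / 3) + 1 := by linarith

/-- Let `Δ` be a positive integer and `G` a graph with maximum degree at most `Δ`. Let
`L = {v : deg v ≤ Δ^(1/3)}`. Then there is a proper colouring `f` of `G[L]` using at most
`2 * Δ^(1/3) + 1` colours such that every vertex `v` of `G` with `N(v) ∩ L ≠ ∅` has a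
neighbour `w ∈ N(v) ∩ L` whose colour differs from that of every other vertex of
`N(v) ∩ L`. -/
theorem statement2 (Δ : ℕ) (hΔ : 0 < Δ)
    (V : Type) [Fintype V] [DecidableEq V] (G : SimpleGraph V) [DecidableRel G.Adj]
    (hmax : ∀ v : V, G.degree v ≤ Δ)
    (L : Finset V) (hL : ∀ v : V, v ∈ L ↔ (G.degree v : ℝ) ≤ (Δ : ℝ) ^ ((1 : ℝ) / 3)) :
    ∃ f : V → ℕ,
      ((L.image f).card : ℝ) ≤ 2 * (Δ : ℝ) ^ ((1 : ℝ) / 3) + 1 ∧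
      (∀ u ∈ L, ∀ v ∈ L, G.Adj u v → f u ≠ f v) ∧
      (∀ v : V, (G.neighborFinset v ∩ L).Nonempty →
        ∃ w ∈ G.neighborFinset v ∩ L,
          ∀ u ∈ G.neighborFinset v ∩ L, u ≠ w → f u ≠ f w) :=
  statement2_general Δ V G L hL
end

section
/- Let G be a graph, let d be a nonnegative integer, and let L = {v ∈ V(G) : deg_G(v) ≤ d}. Then there is a proper colouring f of the induced subgraph G[L] using at most 2d + 1 colours such that for every vertex v of G with N(v) ∩ L ≠ ∅ there exists w ∈ N(v) ∩ L whose colour f(w) is different from the colour of every other vertex of N(v) ∩ L. -/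
/-!
Colour the vertices of `L` greedily, one at a time. When a vertex `a` of degree at most `d`
is added, it must avoid the colours of its at most `d` already coloured neighbours (properness)
and, for each of its at most `d` neighbours `v`, the colour of the vertex currently uniquely
coloured in `N(v)` (so that this vertex stays uniquely coloured). That forbids at most `2d` of
the `2d + 1` colours.
-/

open Finset

namespace SimpleGraph

variable {V : Type*}

def IsUniquelyColoredIn (f : V → ℕ) (T : Finset V) (w : V) : Prop :=
  w ∈ T ∧ ∀ u ∈ T, u ≠ w → f u ≠ f w

theorem isUniquelyColoredIn_singleton (f : V → ℕ) (a : V) :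
    IsUniquelyColoredIn f {a} a :=
  ⟨mem_singleton_self a, fun _ hu hne => (hne (mem_singleton.1 hu)).elim⟩

theorem IsUniquelyColoredIn.congr {f g : V → ℕ} {T : Finset V} {w : V}
    (h : IsUniquelyColoredIn f T w) (hfg : Set.EqOn f g T) : IsUniquelyColoredIn g T w :=
  ⟨h.1, fun u hu hne => hfg hu ▸ hfg h.1 ▸ h.2 u hu hne⟩

variable [DecidableEq V]

theorem IsUniquelyColoredIn.update_insert {f : V → ℕ} {T : Finset V} {w a : V} {c : ℕ}
    (h : IsUniquelyColoredIn f T w) (ha : a ∉ T) (hc : c ≠ f w) :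
    IsUniquelyColoredIn (Function.update f a c) (insert a T) w := by
  have hwa : w ≠ a := ne_of_mem_of_not_mem h.1 ha
  refine ⟨mem_insert_of_mem h.1, fun u hu hne => ?_⟩
  rw [Function.update_of_ne hwa]
  rcases mem_insert.1 hu with rfl | huT
  · rwa [Function.update_self]
  · rw [Function.update_of_ne (ne_of_mem_of_not_mem huT ha)]
    exact h.2 u huT hne

variable [Fintype V] (G : SimpleGraph V) [DecidableRel G.Adj]

structure IsConflictFreeColoringOn (n : ℕ) (S : Finset V) (f : V → ℕ) : Prop where
  lt : ∀ u ∈ S, f u < n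
  proper : ∀ u ∈ S, ∀ v ∈ S, G.Adj u v → f u ≠ f v
  unique : ∀ v, (G.neighborFinset v ∩ S).Nonempty →
    ∃ w, IsUniquelyColoredIn f (G.neighborFinset v ∩ S) w

variable {G}

theorem isConflictFreeColoringOn_empty (n : ℕ) (f : V → ℕ) :
    G.IsConflictFreeColoringOn n ∅ f :=
  ⟨by simp, by simp, by simp⟩

theorem IsConflictFreeColoringOn.update_insert {n : ℕ} {S : Finset V} {f : V → ℕ} {a : V}
    {c : ℕ} {wit : V → V} (hf : G.IsConflictFreeColoringOn n S f) (ha : a ∉ S)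
    (hwit : ∀ v, (G.neighborFinset v ∩ S).Nonempty →
      IsUniquelyColoredIn f (G.neighborFinset v ∩ S) (wit v))
    (hc : c < n) (hcS : ∀ u ∈ G.neighborFinset a ∩ S, f u ≠ c)
    (hcwit : ∀ v ∈ G.neighborFinset a, f (wit v) ≠ c) :
    G.IsConflictFreeColoringOn n (insert a S) (Function.update f a c) := by
  have hfg : Set.EqOn f (Function.update f a c) S := fun u hu =>
    (Function.update_of_ne (ne_of_mem_of_not_mem hu ha) c f).symm
  have hcv : ∀ v ∈ S, G.Adj a v → c ≠ f v := fun v hv hav =>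
    (hcS v (mem_inter.2 ⟨(mem_neighborFinset ..).2 hav, hv⟩)).symm
  refine ⟨fun u hu => ?_, fun u hu v hv huv => ?_, fun v hv => ?_⟩
  · rcases mem_insert.1 hu with rfl | huS
    · rwa [Function.update_self]
    · rw [← hfg huS]; exact hf.lt u huS
  · rcases mem_insert.1 hu with rfl | huS <;> rcases mem_insert.1 hv with rfl | hvS
    · exact (G.irrefl huv).elim
    · rw [Function.update_self, ← hfg hvS]; exact hcv v hvS huv
    · rw [Function.update_self, ← hfg huS]; exact (hcv u huS huv.symm).symm
    · rw [← hfg huS, ← hfg hvS]; exact hf.proper u huS v hvS huv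
  · by_cases hva : G.Adj v a
    · rw [inter_insert_of_mem ((mem_neighborFinset ..).2 hva)] at hv ⊢
      by_cases hvS : (G.neighborFinset v ∩ S).Nonempty
      · exact ⟨wit v, (hwit v hvS).update_insert (fun h => ha (mem_inter.1 h).2)
          (hcwit v ((mem_neighborFinset ..).2 hva.symm)).symm⟩
      · rw [not_nonempty_iff_eq_empty.1 hvS]
        exact ⟨a, isUniquelyColoredIn_singleton _ a⟩
    · rw [inter_insert_of_notMem (fun h => hva ((mem_neighborFinset ..).1 h))] at hv ⊢
      obtain ⟨w, hw⟩ := hf.unique v hv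
      exact ⟨w, hw.congr fun u hu => hfg (mem_inter.1 hu).2⟩

theorem exists_isConflictFreeColoringOn {d : ℕ} (S : Finset V)
    (hS : ∀ a ∈ S, G.degree a ≤ d) : ∃ f, G.IsConflictFreeColoringOn (2 * d + 1) S f := by
  induction S using Finset.induction_on with
  | empty => exact ⟨fun _ => 0, isConflictFreeColoringOn_empty _ _⟩
  | @insert a S ha ih =>
    obtain ⟨f, hf⟩ := ih fun u hu => hS u (mem_insert_of_mem hu)
    have hdeg : (G.neighborFinset a).card ≤ d := (card_neighborFinset_eq_degree G a).le.trans
      (hS a (mem_insert_self a S))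
    have : Nonempty V := ⟨a⟩
    choose! wit hwit using hf.unique
    set forbidden := (G.neighborFinset a ∩ S).image f ∪ (G.neighborFinset a).image (f ∘ wit)
    have hforbidden : forbidden.card < (range (2 * d + 1)).card :=
      calc forbidden.card
          ≤ ((G.neighborFinset a ∩ S).image f).card
            + ((G.neighborFinset a).image (f ∘ wit)).card := card_union_le _ _
        _ ≤ d + d := add_le_add (card_image_le.trans ((card_le_card inter_subset_left).trans
            hdeg)) (card_image_le.trans hdeg)
        _ < (range (2 * d + 1)).card := by rw [card_range]; omega
    obtain ⟨c, hc, hcf⟩ := exists_mem_notMem_of_card_lt_card hforbidden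
    refine ⟨Function.update f a c, hf.update_insert ha hwit (mem_range.1 hc) ?_ ?_⟩
    · exact fun u hu h => hcf (mem_union_left _ (h ▸ mem_image_of_mem f hu))
    · exact fun v hv h => hcf (mem_union_right _ (h ▸ mem_image_of_mem (f ∘ wit) hv))

end SimpleGraph

/-- Let `G` be a graph, `d` a nonnegative integer, and `L = {v : deg v ≤ d}`. Then there is
a proper colouring `f` of `G[L]` using at most `2 * d + 1` colours such that every vertex
`v` of `G` with `N(v) ∩ L ≠ ∅` has a neighbour `w ∈ N(v) ∩ L` whose colour differs from
that of every other vertex of `N(v) ∩ L`. -/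
theorem statement3 (d : ℕ)
    (V : Type) [Fintype V] [DecidableEq V] (G : SimpleGraph V) [DecidableRel G.Adj]
    (L : Finset V) (hL : ∀ v : V, v ∈ L ↔ G.degree v ≤ d) :
    ∃ f : V → ℕ,
      (L.image f).card ≤ 2 * d + 1 ∧
      (∀ u ∈ L, ∀ v ∈ L, G.Adj u v → f u ≠ f v) ∧
      (∀ v : V, (G.neighborFinset v ∩ L).Nonempty →
        ∃ w ∈ G.neighborFinset v ∩ L,
          ∀ u ∈ G.neighborFinset v ∩ L, u ≠ w → f u ≠ f w) := by
  obtain ⟨f, hf⟩ := G.exists_isConflictFreeColoringOn L fun v => (hL v).1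
  have hcolors : L.image f ⊆ range (2 * d + 1) :=
    image_subset_iff.2 fun u hu => mem_range.2 (hf.lt u hu)
  exact ⟨f, (card_le_card hcolors).trans (card_range _).le, hf.proper, hf.unique⟩
end

section
/- There exists a positive integer Δ₀ such that for every integer Δ ≥ Δ₀ the following holds. Let t = ⌈18·Δ^{1/3}⌉ and let S be a finite set with 50 ≤ |S| ≤ Δ^{1/3}. If each element of S is assigned independently and uniformly at random to one of t parts, then the probability that no part contains exactly one element of S is at most 1/(20·Δ⁴). Equivalently, the number of functions h : S → [t] such that no element of [t] has exactly one preimage is at most t^{|S|}/(20·Δ⁴). -/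
/-!
If no part receives exactly one element, every occupied part receives at least two, so at most
`m = ⌊|S|/2⌋` parts are occupied and there are at most `C(t, m) · m^|S|` bad assignments. With
`C(t, m) ≤ t^m / m!` and `m^m / m! ≤ e^m ≤ 3^m`, their proportion is at most `(3m / t)^K`, where
`K = |S| - m ≥ m ≥ 25`. Since `3m / t ≤ m / (6 Δ^(1/3)) ≤ 1/12`, splitting off twelve factors
bounds this by `2^12 m^12 / (Δ^4 · 12^K)`, and `20 · 2^12 · m^12 ≤ 12^m ≤ 12^K`.
-/

open Finset

section Counting

variable {S α : Type*} [Fintype S]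

lemma card_image_mul_two_le_of_fiber_ne_one [DecidableEq α] (h : S → α)
    (hfib : ∀ a, #{s | h s = a} ≠ 1) : #(univ.image h) * 2 ≤ Fintype.card S := by
  have hge : ∀ a ∈ univ.image h, 2 ≤ #{s | h s = a} := by
    intro a ha
    obtain ⟨s, -, rfl⟩ := mem_image.mp ha
    have : 0 < #{s' | h s' = h s} := card_pos.mpr ⟨s, by simp⟩
    have := hfib (h s)
    omega
  calc #(univ.image h) * 2 ≤ ∑ a ∈ univ.image h, #{s | h s = a} := by
        simpa using card_nsmul_le_sum _ _ 2 hge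
    _ = Fintype.card S := (card_eq_sum_card_image h univ).symm.trans card_univ

lemma card_filter_card_image_le_le [DecidableEq S] [Fintype α] [DecidableEq α] {m : ℕ}
    (hm : m ≤ Fintype.card α) :
    #{h : S → α | #(univ.image h) ≤ m} ≤ (Fintype.card α).choose m * m ^ Fintype.card S := by
  have hcover : univ.filter (fun h : S → α => #(univ.image h) ≤ m) ⊆
      (powersetCard m univ).biUnion fun T => Fintype.piFinset fun _ => T := by
    intro h hh
    obtain ⟨T, hT, -, hTm⟩ :=
      exists_subsuperset_card_eq (subset_univ (univ.image h)) (mem_filter.mp hh).2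
        (by simpa using hm)
    exact mem_biUnion.mpr ⟨T, mem_powersetCard.mpr ⟨subset_univ T, hTm⟩,
      Fintype.mem_piFinset.mpr fun s => hT (mem_image_of_mem h (mem_univ s))⟩
  calc _ ≤ _ := card_le_card hcover
    _ ≤ ∑ T ∈ powersetCard m (univ : Finset α), #(Fintype.piFinset fun _ : S => T) :=
      card_biUnion_le
    _ = _ := by
      rw [sum_congr rfl fun T hT => by
        rw [Fintype.card_piFinset, prod_const, (mem_powersetCard.mp hT).2, card_univ]]
      simp

lemma card_filter_fiber_ne_one_le [DecidableEq S] [Fintype α] [DecidableEq α] {m : ℕ}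
    (hS : Fintype.card S ≤ 2 * m + 1) (hm : m ≤ Fintype.card α) :
    #{h : S → α | ∀ a, #{s | h s = a} ≠ 1} ≤ (Fintype.card α).choose m * m ^ Fintype.card S := by
  refine le_trans (card_le_card fun h hh => mem_filter.mpr ⟨mem_univ h, ?_⟩)
    (card_filter_card_image_le_le hm)
  have := card_image_mul_two_le_of_fiber_ne_one h (mem_filter.mp hh).2
  omega

end Counting

lemma pow_le_three_pow_mul_factorial (m : ℕ) : (m : ℝ) ^ m ≤ 3 ^ m * m.factorial := by
  have hexp : Real.exp m ≤ 3 ^ m := by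
    rw [← Real.exp_one_pow]
    exact pow_le_pow_left₀ (Real.exp_pos 1).le Real.exp_one_lt_three.le m
  rw [← div_le_iff₀ (by positivity)]
  exact (Real.pow_div_factorial_le_exp _ (Nat.cast_nonneg m) m).trans hexp

lemma choose_mul_pow_add_le {t m K : ℕ} (hmK : m ≤ K) :
    (t.choose m : ℝ) * (m : ℝ) ^ (m + K) ≤ (t : ℝ) ^ m * (3 * m) ^ K := by
  have hfac : (0 : ℝ) < m.factorial := by exact_mod_cast m.factorial_pos
  calc (t.choose m : ℝ) * (m : ℝ) ^ (m + K)
      ≤ (t : ℝ) ^ m / m.factorial * ((m : ℝ) ^ m * (m : ℝ) ^ K) := by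
        rw [pow_add]; gcongr; exact Nat.choose_le_pow_div m t
    _ ≤ (t : ℝ) ^ m / m.factorial * (3 ^ m * m.factorial * (m : ℝ) ^ K) := by
        gcongr; exact pow_le_three_pow_mul_factorial m
    _ = (t : ℝ) ^ m * (3 ^ m * (m : ℝ) ^ K) := by field_simp
    _ ≤ (t : ℝ) ^ m * (3 ^ K * (m : ℝ) ^ K) := by gcongr; norm_num
    _ = (t : ℝ) ^ m * (3 * m) ^ K := by rw [mul_pow]

lemma mul_pow_twelve_le_twelve_pow {m : ℕ} (hm : 25 ≤ m) : 81920 * m ^ 12 ≤ 12 ^ m := by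
  induction m, hm using Nat.le_induction with
  | base => norm_num
  | succ m hm ih =>
    have hstep : 25 ^ 12 * (m + 1) ^ 12 ≤ 25 ^ 12 * (12 * m ^ 12) :=
      calc 25 ^ 12 * (m + 1) ^ 12 = (25 * (m + 1)) ^ 12 := by ring
        _ ≤ (26 * m) ^ 12 := Nat.pow_le_pow_left (by omega) 12
        _ = 26 ^ 12 * m ^ 12 := by ring
        _ ≤ 25 ^ 12 * 12 * m ^ 12 := Nat.mul_le_mul_right _ (by norm_num)
        _ = 25 ^ 12 * (12 * m ^ 12) := by ring
    calc 81920 * (m + 1) ^ 12 ≤ 81920 * (12 * m ^ 12) := by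
          gcongr; exact Nat.le_of_mul_le_mul_left hstep (by norm_num)
      _ = 12 * (81920 * m ^ 12) := by ring
      _ ≤ 12 * 12 ^ m := by gcongr
      _ = 12 ^ (m + 1) := by ring

lemma twenty_mul_pow_twelve_mul_le {m K : ℕ} {R t : ℝ} (hm : 25 ≤ m) (hmK : m ≤ K)
    (hmR : 2 * m ≤ R) (htR : 18 * R ≤ t) : 20 * R ^ 12 * (3 * m) ^ K ≤ t ^ K := by
  obtain ⟨j, rfl⟩ : ∃ j, K = 12 + j := ⟨K - 12, by omega⟩
  have hpoly : (81920 : ℝ) * m ^ 12 ≤ 12 ^ (12 + j) := by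
    exact_mod_cast (mul_pow_twelve_le_twelve_pow hm).trans (Nat.pow_le_pow_right (by norm_num) hmK)
  have hR : 0 ≤ R := le_trans (by positivity) hmR
  calc 20 * R ^ 12 * (3 * m) ^ (12 + j)
      = 81920 * (m : ℝ) ^ 12 * ((3 * R / 2) ^ 12 * (3 * m) ^ j) := by ring
    _ ≤ 12 ^ (12 + j) * ((3 * R / 2) ^ 12 * (3 * R / 2) ^ j) := by gcongr; linarith
    _ = (12 * (3 * R / 2)) ^ (12 + j) := by rw [mul_pow, pow_add (3 * R / 2)]
    _ = (18 * R) ^ (12 + j) := by congr 1; ring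
    _ ≤ t ^ (12 + j) := by gcongr

/-- There exists `Δ₀` such that for every `Δ ≥ Δ₀` the following holds. Let
`t = ⌈18 Δ^(1/3)⌉` and let `S` be a finite set with `50 ≤ |S| ≤ Δ^(1/3)`. The number of
functions `h : S → [t]` such that no element of `[t]` has exactly one preimage is at most
`t^|S| / (20 Δ⁴)`; equivalently, if each element of `S` is assigned independently and
uniformly at random to one of `t` parts, the probability that no part contains exactly one
element of `S` is at most `1/(20 Δ⁴)`. -/
theorem statement7 :
    ∃ Δ₀ : ℕ, 0 < Δ₀ ∧ ∀ Δ : ℕ, Δ₀ ≤ Δ →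
      ∀ t : ℕ, t = ⌈(18 : ℝ) * (Δ : ℝ) ^ ((1 : ℝ) / 3)⌉₊ →
      ∀ (S : Type) [Fintype S] [DecidableEq S],
        50 ≤ Fintype.card S → (Fintype.card S : ℝ) ≤ (Δ : ℝ) ^ ((1 : ℝ) / 3) →
        ((Finset.univ.filter (fun h : S → Fin t =>
            ∀ i : Fin t, (Finset.univ.filter (fun s : S => h s = i)).card ≠ 1)).card : ℝ)
          ≤ (t : ℝ) ^ (Fintype.card S) / (20 * (Δ : ℝ) ^ 4) := by
  refine ⟨1, one_pos, fun Δ _ t ht S _ _ hn50 hnR => ?_⟩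
  set R : ℝ := (Δ : ℝ) ^ ((1 : ℝ) / 3)
  have hΔ : (Δ : ℝ) ^ 4 = R ^ 12 := by
    have hR3 : R ^ 3 = Δ := by
      simpa [R, one_div] using Real.rpow_inv_natCast_pow (Nat.cast_nonneg Δ) three_ne_zero
    rw [← hR3]; ring
  have htR : 18 * R ≤ t := ht ▸ Nat.le_ceil _
  obtain ⟨m, K, hn, hmK, hK⟩ : ∃ m K, Fintype.card S = m + K ∧ m ≤ K ∧ K ≤ m + 1 :=
    ⟨Fintype.card S / 2, Fintype.card S - Fintype.card S / 2, by omega, by omega, by omega⟩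
  have hmR : 2 * (m : ℝ) ≤ R := by
    have h2m : ((2 * m : ℕ) : ℝ) ≤ Fintype.card S := by exact_mod_cast (by omega : 2 * m ≤ _)
    push_cast at h2m
    linarith
  have hmt : m ≤ t := by exact_mod_cast (show (m : ℝ) ≤ t by linarith)
  have hbad := card_filter_fiber_ne_one_le (S := S) (α := Fin t) (m := m) (by omega)
    (by rwa [Fintype.card_fin])
  rw [Fintype.card_fin, hn] at hbad
  rw [le_div_iff₀ (by rw [hΔ]; positivity), hΔ, hn, pow_add]
  calc _ ≤ (t.choose m : ℝ) * (m : ℝ) ^ (m + K) * (20 * R ^ 12) :=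
        mul_le_mul_of_nonneg_right (by exact_mod_cast hbad) (by positivity)
    _ ≤ (t : ℝ) ^ m * (3 * m) ^ K * (20 * R ^ 12) :=
        mul_le_mul_of_nonneg_right (choose_mul_pow_add_le hmK) (by positivity)
    _ ≤ _ := by
        rw [mul_assoc]
        gcongr
        linarith [twenty_mul_pow_twelve_mul_le (by omega) hmK hmR htR]
end

section
/- Let Δ > 1 be a real number, let G be a graph, let H' ⊆ V(G), and let v ∈ H' be a vertex with deg_G(v) ≤ Δ. Then the number of vertices u ∈ H' \ {v} such that u and v have at least Δ^{1/3}/log Δ common neighbours w in G with |N(w) ∩ H'| ≤ 50 is at most 50·Δ^{2/3}·log Δ. -/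
open Finset

namespace SimpleGraph

variable {V : Type*} [Fintype V] [DecidableEq V] (G : SimpleGraph V) [DecidableRel G.Adj]

/-- Double count the edges between the counted vertices `u` and the neighbours `w` of `v` with
at most `k` neighbours in `H'`: each `u` sees at least `t` such `w`, and each such `w` sees at
most `k` vertices of `s ⊆ H'`. -/
theorem card_filter_le_card_commonNeighbors_mul_le {s H' : Finset V} (hs : s ⊆ H') (v : V)
    (k : ℕ) (t : ℝ) :
    #(s.filter fun u => t ≤ #((G.neighborFinset u ∩ G.neighborFinset v).filter
        fun w => #(G.neighborFinset w ∩ H') ≤ k)) * t ≤ k * G.degree v := by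
  set W := (G.neighborFinset v).filter fun w => #(G.neighborFinset w ∩ H') ≤ k
  set S := s.filter fun u => t ≤ #((G.neighborFinset u ∩ G.neighborFinset v).filter
    fun w => #(G.neighborFinset w ∩ H') ≤ k)
  have hS : ∀ u ∈ S, t ≤ #(W.bipartiteAbove G.Adj u) := by
    intro u hu
    convert (mem_filter.mp hu).2 using 3
    ext w
    simp only [W, mem_bipartiteAbove, mem_filter, mem_inter, mem_neighborFinset]
    tauto
  have hW : ∀ w ∈ W, (#(S.bipartiteBelow G.Adj w) : ℝ) ≤ k := by
    intro w hw
    refine le_trans ?_ (Nat.cast_le.mpr (mem_filter.mp hw).2)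
    refine Nat.cast_le.mpr (card_le_card fun u hu => ?_)
    obtain ⟨huS, huw⟩ := (mem_bipartiteBelow G.Adj).mp hu
    exact mem_inter.mpr ⟨(G.mem_neighborFinset w u).mpr huw.symm, hs (mem_filter.mp huS).1⟩
  have hWv : #W ≤ G.degree v := (card_filter_le _ _).trans (G.card_neighborFinset_eq_degree v).le
  calc (#S : ℝ) * t = #S • t := (nsmul_eq_mul _ _).symm
    _ ≤ #W • (k : ℝ) := card_nsmul_le_card_nsmul G.Adj hS hW
    _ ≤ k * G.degree v := by
      rw [nsmul_eq_mul, mul_comm]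
      gcongr

end SimpleGraph

theorem Real.div_div_rpow_one_third {x : ℝ} (hx : 0 < x) (c : ℝ) :
    x / (x ^ ((1 : ℝ) / 3) / c) = x ^ ((2 : ℝ) / 3) * c := by
  have hsplit : x = x ^ ((2 : ℝ) / 3) * x ^ ((1 : ℝ) / 3) := by
    rw [← Real.rpow_add hx]; norm_num
  have hpos : 0 < x ^ ((1 : ℝ) / 3) := Real.rpow_pos_of_pos hx _
  rw [div_div_eq_mul_div, div_eq_iff hpos.ne', mul_right_comm, ← hsplit]

theorem statement10_general (Δ : ℝ) (hΔ : 1 < Δ)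
    (V : Type) [Fintype V] [DecidableEq V] (G : SimpleGraph V) [DecidableRel G.Adj]
    (H' : Finset V) (v : V) (hdeg : (G.degree v : ℝ) ≤ Δ) :
    (((H'.erase v).filter (fun u =>
        Δ ^ ((1 : ℝ) / 3) / Real.log Δ ≤
          (((G.neighborFinset u ∩ G.neighborFinset v).filter
            (fun w => (G.neighborFinset w ∩ H').card ≤ 50)).card : ℝ))).card : ℝ)
      ≤ 50 * Δ ^ ((2 : ℝ) / 3) * Real.log Δ := by
  have hΔ0 : 0 < Δ := by linarith
  have ht : 0 < Δ ^ ((1 : ℝ) / 3) / Real.log Δ :=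
    div_pos (Real.rpow_pos_of_pos hΔ0 _) (Real.log_pos hΔ)
  have hcount := G.card_filter_le_card_commonNeighbors_mul_le (H'.erase_subset v) v 50
    (Δ ^ ((1 : ℝ) / 3) / Real.log Δ)
  calc _ ≤ 50 * (G.degree v : ℝ) / (Δ ^ ((1 : ℝ) / 3) / Real.log Δ) := by
        rw [le_div_iff₀ ht]; exact_mod_cast hcount
    _ ≤ 50 * Δ / (Δ ^ ((1 : ℝ) / 3) / Real.log Δ) := by gcongr
    _ = 50 * Δ ^ ((2 : ℝ) / 3) * Real.log Δ := by
        rw [mul_div_assoc, Real.div_div_rpow_one_third hΔ0, mul_assoc]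

/-- Let `Δ > 1` be a real number, `G` a graph, `H' ⊆ V(G)`, and `v ∈ H'` with
`deg v ≤ Δ`. Then the number of `u ∈ H' \ {v}` such that `u` and `v` have at least
`Δ^(1/3)/log Δ` common neighbours `w` with `|N(w) ∩ H'| ≤ 50` is at most
`50 Δ^(2/3) log Δ`. -/
theorem statement10 (Δ : ℝ) (hΔ : 1 < Δ)
    (V : Type) [Fintype V] [DecidableEq V] (G : SimpleGraph V) [DecidableRel G.Adj]
    (H' : Finset V) (v : V) (hv : v ∈ H') (hdeg : (G.degree v : ℝ) ≤ Δ) :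
    (((H'.erase v).filter (fun u =>
        Δ ^ ((1 : ℝ) / 3) / Real.log Δ ≤
          (((G.neighborFinset u ∩ G.neighborFinset v).filter
            (fun w => (G.neighborFinset w ∩ H').card ≤ 50)).card : ℝ))).card : ℝ)
      ≤ 50 * Δ ^ ((2 : ℝ) / 3) * Real.log Δ :=
  statement10_general Δ hΔ V G H' v hdeg
end

section
/- Let G' be a graph whose vertex set is partitioned into sets H' and L' such that every vertex of L' has all of its neighbours in H'. Then for every vertex v ∈ H', the number of vertices of H' which are nearby v is at most |N_{G'}(v) ∩ L'|/2. -/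
open scoped Classical

/-- `u` is nearby `v` if `u ≠ v` and `u` and `v` have at least 100 common neighbours
`w ∈ L'` with `deg w ≤ 50`. -/
def Nearby {V : Type*} [Fintype V] [DecidableEq V]
    (G' : SimpleGraph V) [DecidableRel G'.Adj] (L' : Finset V) (u v : V) : Prop :=
  u ≠ v ∧ 100 ≤ (((L' ∩ G'.neighborFinset u) ∩ G'.neighborFinset v).filter
      (fun w => G'.degree w ≤ 50)).card

namespace SimpleGraph

variable {V : Type*} [Fintype V] (G : SimpleGraph V) [DecidableRel G.Adj]

lemma card_bipartiteBelow_adj_le_degree (s : Finset V) (w : V) :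
    (s.bipartiteBelow G.Adj w).card ≤ G.degree w := by
  rw [← card_neighborFinset_eq_degree]
  refine Finset.card_le_card fun u hu => ?_
  rw [mem_neighborFinset]
  exact (Finset.mem_filter.mp hu).2.symm

end SimpleGraph

section Nearby

variable {V : Type*} [Fintype V] [DecidableEq V] (G' : SimpleGraph V) [DecidableRel G'.Adj]
  (L' : Finset V)

def lowDegreeNeighbors (v : V) : Finset V :=
  (G'.neighborFinset v ∩ L').filter (fun w => G'.degree w ≤ 50)

variable {G' L'}

lemma Nearby.le_card_bipartiteAbove {u v : V} (huv : Nearby G' L' u v) :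
    100 ≤ ((lowDegreeNeighbors G' L' v).bipartiteAbove G'.Adj u).card := by
  refine huv.2.trans (Finset.card_le_card fun w hw => ?_)
  simp only [lowDegreeNeighbors, Finset.bipartiteAbove, Finset.mem_filter, Finset.mem_inter,
    SimpleGraph.mem_neighborFinset] at hw ⊢
  exact ⟨⟨⟨hw.1.2, hw.1.1.1⟩, hw.2⟩, hw.1.1.2⟩

/-- Double counting the edges between the vertices nearby `v` and the low-degree neighbours
of `v`: each nearby vertex sends at least `100` of them, each low-degree vertex receives at
most `50`. -/
lemma two_mul_card_nearby_le (H : Finset V) (v : V) :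
    2 * (H.filter (fun u => Nearby G' L' u v)).card ≤ (lowDegreeNeighbors G' L' v).card := by
  have := Finset.card_mul_le_card_mul (s := H.filter (fun u => Nearby G' L' u v))
    (t := lowDegreeNeighbors G' L' v) (r := G'.Adj) (m := 100) (n := 50)
    (fun u hu => Nearby.le_card_bipartiteAbove (Finset.mem_filter.mp hu).2)
    (fun w hw => (G'.card_bipartiteBelow_adj_le_degree _ w).trans (Finset.mem_filter.mp hw).2)
  omega

end Nearby

theorem statement11_general
    (V : Type) [Fintype V] [DecidableEq V] (G' : SimpleGraph V) [DecidableRel G'.Adj]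
    (H' L' : Finset V)
    (v : V) :
    ((H'.filter (fun u => Nearby G' L' u v)).card : ℝ) ≤
      ((G'.neighborFinset v ∩ L').card : ℝ) / 2 := by
  have hlow : (lowDegreeNeighbors G' L' v).card ≤ (G'.neighborFinset v ∩ L').card :=
    Finset.card_filter_le _ _
  have := two_mul_card_nearby_le (G' := G') (L' := L') H' v
  rw [le_div_iff₀ two_pos, mul_comm]
  exact_mod_cast this.trans hlow

/-- If the vertex set of `G'` is partitioned into `H'` and `L'` with every vertex of `L'`
having all of its neighbours in `H'`, then for every `v ∈ H'` the number of vertices of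
`H'` nearby `v` is at most `|N(v) ∩ L'| / 2`. -/
theorem statement11
    (V : Type) [Fintype V] [DecidableEq V] (G' : SimpleGraph V) [DecidableRel G'.Adj]
    (H' L' : Finset V)
    (hdisj : Disjoint H' L') (hunion : H' ∪ L' = Finset.univ)
    (hL' : ∀ w ∈ L', G'.neighborFinset w ⊆ H')
    (v : V) (hv : v ∈ H') :
    ((H'.filter (fun u => Nearby G' L' u v)).card : ℝ) ≤
      ((G'.neighborFinset v ∩ L').card : ℝ) / 2 :=
  statement11_general V G' H' L' v
end

section
/- Let t be a positive integer. Let G' be a graph whose vertex set is partitioned into sets H' and L' such that every vertex of L' has all of its neighbours in H'. Let w ∈ L' be a vertex with N_{G'}(w) ≠ ∅. Assign to each vertex u of H' an independent uniformly random index h(u) ∈ [t], inducing the partition {h^{-1}(i) : i ∈ [t]} of H'. Then the probability that w is dangerous with respect to this partition is at most |N_{G'}(w)|³/t². -/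
/-!
Fix a neighbour `u` of `w`. If the partition is dangerous, the clause for `u` yields neighbours
`u' ≠ u` in the part of `u` and `u''` outside `{u, u'}` sharing its part with some neighbour
`u''' ≠ u''`. Each such triple `(u', u'', u''')` forces two independent coincidences of the
random colouring, of probability `t⁻²`, and there are at most `|N(w)|³` triples.
-/

open scoped Classical

/-- `w ∈ L'` is dangerous with respect to the partition `{Hs i : i ∈ [t]}` of `H'`. -/
def Dangerous {V : Type*} [Fintype V] [DecidableEq V]
    (G' : SimpleGraph V) [DecidableRel G'.Adj] (L' : Finset V)
    {t : ℕ} (Hs : Fin t → Finset V) (w : V) : Prop :=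
  ∀ u ∈ G'.neighborFinset w, ∃ i : Fin t, ∃ u' ∈ (G'.neighborFinset w ∩ Hs i) \ {u},
    u ∈ Hs i ∧ ¬ G'.Adj u u' ∧ ¬ Nearby G' L' u' u ∧
    ∃ u'' ∈ G'.neighborFinset w \ (G'.neighborFinset u ∪ {u, u'}),
      ∃ j : Fin t, u'' ∈ Hs j ∧ 2 ≤ (Hs j ∩ G'.neighborFinset w).card

/-- The part `h⁻¹(i)` of the partition of `H'` induced by an assignment `h : H' → [t]`. -/
def part {V : Type*} [DecidableEq V] (H' : Finset V) {t : ℕ}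
    (h : H' → Fin t) (i : Fin t) : Finset V :=
  (H'.attach.filter (fun u => h u = i)).map ⟨Subtype.val, Subtype.val_injective⟩

open Finset

section CollisionCount

variable {α β : Type*} [DecidableEq α]

def collisionTriples (s : Finset α) (a : α) : Finset (α × α × α) :=
  {p ∈ s ×ˢ s ×ˢ s | a ≠ p.1 ∧ p.2.1 ≠ p.2.2 ∧ p.2.1 ≠ a ∧ p.2.1 ≠ p.1}

theorem card_collisionTriples_le (s : Finset α) (a : α) : #(collisionTriples s a) ≤ #s ^ 3 :=
  (card_filter_le _ _).trans_eq (by simp [card_product, pow_succ, mul_assoc])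

variable [Fintype α] [Fintype β]

theorem card_filter_apply_eq_and_apply_eq_mul_sq_le {a b c d : α}
    (hab : a ≠ b) (hcd : c ≠ d) (hca : c ≠ a) (hcb : c ≠ b) :
    #{f : α → β | f a = f b ∧ f c = f d} * Fintype.card β ^ 2
      ≤ Fintype.card β ^ Fintype.card α := by
  -- On the event, `f b = f a` and `f c = f d` (`= f a` if `d = b`) are read off `{b, c}ᶜ`.
  have hrestrict : Set.InjOn (fun (f : α → β) (x : ↥({b, c}ᶜ : Finset α)) => f x)
      ↑({f : α → β | f a = f b ∧ f c = f d} : Finset (α → β)) := by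
    intro f hf g hg hfg
    obtain ⟨hfb, hfd⟩ := (mem_filter.1 hf).2
    obtain ⟨hgb, hgd⟩ := (mem_filter.1 hg).2
    have off : ∀ x ∉ ({b, c} : Finset α), f x = g x := fun x hx =>
      congrFun hfg ⟨x, mem_compl.2 hx⟩
    have hb : f b = g b := by
      rw [← hfb, ← hgb, off a (by simp [hab, hca.symm])]
    have hc : f c = g c := by
      rw [hfd, hgd]
      by_cases hdb : d = b
      · rw [hdb, hb]
      · exact off d (by simp [hdb, hcd.symm])
    funext x
    by_cases hx : x ∈ ({b, c} : Finset α)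
    · rcases mem_insert.1 hx with rfl | hx
      · exact hb
      · rw [mem_singleton.1 hx, hc]
    · exact off x hx
  have hcard := card_le_card_of_injOn _ (fun _ _ => mem_univ _) hrestrict
  rw [card_univ, Fintype.card_fun, Fintype.card_coe] at hcard
  calc _ ≤ Fintype.card β ^ #({b, c}ᶜ) * Fintype.card β ^ #({b, c} : Finset α) := by
        rw [card_pair hcb.symm]
        gcongr
    _ = _ := by rw [← pow_add, card_compl_add_card]

theorem card_filter_mul_sq_le_of_exists_collision (P : (α → β) → Prop) [DecidablePred P]
    (s : Finset α) (a : α)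
    (hP : ∀ f, P f → ∃ p ∈ collisionTriples s a, f a = f p.1 ∧ f p.2.1 = f p.2.2) :
    #{f | P f} * Fintype.card β ^ 2 ≤ #s ^ 3 * Fintype.card β ^ Fintype.card α := by
  have hcover : ({f | P f} : Finset (α → β)) ⊆ (collisionTriples s a).biUnion
      fun p => {f : α → β | f a = f p.1 ∧ f p.2.1 = f p.2.2} := by
    intro f hf
    obtain ⟨p, hp, hfp⟩ := hP f (mem_filter.1 hf).2
    exact mem_biUnion.2 ⟨p, hp, mem_filter.2 ⟨mem_univ _, hfp⟩⟩
  calc #{f | P f} * Fintype.card β ^ 2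
      ≤ (∑ p ∈ collisionTriples s a, #{f : α → β | f a = f p.1 ∧ f p.2.1 = f p.2.2})
          * Fintype.card β ^ 2 := by
        gcongr; exact (card_le_card hcover).trans card_biUnion_le
    _ ≤ ∑ _p ∈ collisionTriples s a, Fintype.card β ^ Fintype.card α := by
        rw [sum_mul]
        gcongr with p hp
        obtain ⟨-, hab, hcd, hca, hcb⟩ := mem_filter.1 hp
        exact card_filter_apply_eq_and_apply_eq_mul_sq_le hab hcd hca hcb
    _ ≤ #s ^ 3 * Fintype.card β ^ Fintype.card α := by
        rw [sum_const, smul_eq_mul]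
        gcongr
        exact card_collisionTriples_le s a

end CollisionCount

section Partition

variable {V : Type*} [DecidableEq V] {H' : Finset V} {t : ℕ} {h : H' → Fin t}

theorem mem_part {i : Fin t} {x : V} :
    x ∈ part H' h i ↔ ∃ hx : x ∈ H', h ⟨x, hx⟩ = i := by
  simp [part]

variable [Fintype V] {G' : SimpleGraph V} [DecidableRel G'.Adj] {L' : Finset V} {w : V}

theorem exists_collision_of_dangerous {a : H'} (ha : (a : V) ∈ G'.neighborFinset w)
    (hd : Dangerous G' L' (part H' h) w) :
    ∃ p ∈ collisionTriples ((G'.neighborFinset w).subtype (· ∈ H')) a,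
      h a = h p.1 ∧ h p.2.1 = h p.2.2 := by
  obtain ⟨i, u', hu', hai, -, -, u'', hu'', j, hu''j, hj⟩ := hd a ha
  simp only [mem_sdiff, mem_inter, mem_singleton] at hu'
  obtain ⟨⟨hu'w, hu'i⟩, hu'a⟩ := hu'
  simp only [mem_sdiff, mem_union, mem_insert, mem_singleton, not_or] at hu''
  obtain ⟨hu''w, -, hu''a, hu''u'⟩ := hu''
  obtain ⟨u''', hu''', hu'''u''⟩ :=
    exists_mem_ne (by omega : 1 < #(part H' h j ∩ G'.neighborFinset w)) u''
  obtain ⟨hu'''j, hu'''w⟩ := mem_inter.1 hu'''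
  obtain ⟨_, hai⟩ := mem_part.1 hai
  obtain ⟨hu'H, hu'i⟩ := mem_part.1 hu'i
  obtain ⟨hu''H, hu''j⟩ := mem_part.1 hu''j
  obtain ⟨hu'''H, hu'''j⟩ := mem_part.1 hu'''j
  refine ⟨(⟨u', hu'H⟩, ⟨u'', hu''H⟩, ⟨u''', hu'''H⟩), ?_,
    hai.trans hu'i.symm, hu''j.trans hu'''j.symm⟩
  simp only [collisionTriples, mem_filter, mem_product, mem_subtype, ne_eq, Subtype.ext_iff]
  exact ⟨⟨hu'w, hu''w, hu'''w⟩, Ne.symm hu'a, Ne.symm hu'''u'', hu''a, hu''u'⟩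

end Partition

theorem statement12_general (t : ℕ) (ht : 0 < t)
    (V : Type) [Fintype V] [DecidableEq V] (G' : SimpleGraph V) [DecidableRel G'.Adj]
    (H' L' : Finset V)
    (hL' : ∀ x ∈ L', G'.neighborFinset x ⊆ H')
    (w : V) (hw : w ∈ L') (hnb : (G'.neighborFinset w).Nonempty) :
    ((Finset.univ.filter (fun h : H' → Fin t =>
        Dangerous G' L' (part H' h) w)).card : ℝ) / (t : ℝ) ^ H'.card
      ≤ ((G'.degree w : ℝ)) ^ 3 / (t : ℝ) ^ 2 := by
  obtain ⟨u, hu⟩ := hnb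
  have hcount := card_filter_mul_sq_le_of_exists_collision
    (fun h : H' → Fin t => Dangerous G' L' (part H' h) w) _ _
    fun h hd => exists_collision_of_dangerous (a := ⟨u, hL' w hw hu⟩) hu hd
  have hN : #((G'.neighborFinset w).subtype (· ∈ H')) ≤ G'.degree w :=
    (card_subtype _ _).trans_le <|
      (card_filter_le _ _).trans_eq (G'.card_neighborFinset_eq_degree w)
  rw [Fintype.card_fin, Fintype.card_coe] at hcount
  rw [div_le_div_iff₀ (by positivity) (by positivity)]
  exact_mod_cast hcount.trans (by gcongr)

/-- If each vertex of `H'` is assigned an independent uniformly random index in `[t]`,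
then the probability that a given vertex `w ∈ L'` with `N(w) ≠ ∅` is dangerous with
respect to the induced partition of `H'` is at most `|N(w)|³ / t²`. -/
theorem statement12 (t : ℕ) (ht : 0 < t)
    (V : Type) [Fintype V] [DecidableEq V] (G' : SimpleGraph V) [DecidableRel G'.Adj]
    (H' L' : Finset V)
    (hdisj : Disjoint H' L') (hunion : H' ∪ L' = Finset.univ)
    (hL' : ∀ x ∈ L', G'.neighborFinset x ⊆ H')
    (w : V) (hw : w ∈ L') (hnb : (G'.neighborFinset w).Nonempty) :
    ((Finset.univ.filter (fun h : H' → Fin t =>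
        Dangerous G' L' (part H' h) w)).card : ℝ) / (t : ℝ) ^ H'.card
      ≤ ((G'.degree w : ℝ)) ^ 3 / (t : ℝ) ^ 2 :=
  statement12_general t ht V G' H' L' hL' w hw hnb
end
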